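/- arXiv:2407.06288 — 3 statements merged into one kernel-verified Lean document; each statement's English description precedes it below -/
import Mathlib

section
/- In a taxman bidding game with charging with tax rate τ ∈ [0,1], the bounded-horizon threshold functions are complementary: for every vertex v and every t ∈ ℕ, f₁(v,t) + f₂(v,t) = 1. -/
noncomputable section

def clamp (x : ℝ) : ℝ := min 1 (max 0 x)

variable {V : Type*} [DecidableEq V]

def fmax (S : V → Finset V) (hS : ∀ v, (S v).Nonempty) (f : V → ℝ) (v : V) : ℝ :=
  (S v).sup' (hS v) f

def fmin (S : V → Finset V) (hS : ∀ v, (S v).Nonempty) (f : V → ℝ) (v : V) : ℝ :=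
  (S v).inf' (hS v) f

/-- Taxman update operator for Player 1. -/
def Av1 (S : V → Finset V) (hS : ∀ v, (S v).Nonempty) (R₁ R₂ : V → ℝ) (τ : ℝ)
    (f : V → ℝ) (v : V) : ℝ :=
  clamp ((((1 - τ) * fmin S hS f v + fmax S hS f v) /
      ((fmax S hS f v - fmin S hS f v - 1) * τ + 2)) * (1 + R₁ v + R₂ v) - R₁ v)

/-- Taxman update operator for Player 2. -/
def Av2 (S : V → Finset V) (hS : ∀ v, (S v).Nonempty) (R₁ R₂ : V → ℝ) (τ : ℝ)
    (f : V → ℝ) (v : V) : ℝ :=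
  clamp ((((1 - τ) * fmin S hS f v + fmax S hS f v) /
      ((fmax S hS f v - fmin S hS f v - 1) * τ + 2)) * (1 + R₁ v + R₂ v) - R₂ v)

/-- Bounded-horizon reachability thresholds of Player 1. -/
def f1 (T : Finset V) (S : V → Finset V) (hS : ∀ v, (S v).Nonempty)
    (R₁ R₂ : V → ℝ) (τ : ℝ) : ℕ → V → ℝ
  | 0 => fun v => if v ∈ T then 0 else 1
  | (t+1) => fun v => if v ∈ T then 0 else Av1 S hS R₁ R₂ τ (f1 T S hS R₁ R₂ τ t) v

/-- Bounded-horizon safety thresholds of Player 2. -/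
def f2 (T : Finset V) (S : V → Finset V) (hS : ∀ v, (S v).Nonempty)
    (R₁ R₂ : V → ℝ) (τ : ℝ) : ℕ → V → ℝ
  | 0 => fun v => if v ∈ T then 1 else 0
  | (t+1) => fun v => if v ∈ T then 1 else Av2 S hS R₁ R₂ τ (f2 T S hS R₁ R₂ τ t) v

end

theorem taxman_bounded_horizon_complementary {V : Type*} [DecidableEq V]
    (T : Finset V) (S : V → Finset V) (hS : ∀ v, (S v).Nonempty)
    (R₁ R₂ : V → ℝ) (hR₁ : ∀ v, 0 ≤ R₁ v) (hR₂ : ∀ v, 0 ≤ R₂ v)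
    (τ : ℝ) (hτ : τ ∈ Set.Icc (0 : ℝ) 1) :
    ∀ (v : V) (t : ℕ),
      f1 T S hS R₁ R₂ τ t v + f2 T S hS R₁ R₂ τ t v = 1 := by
  have clamp_sum : ∀ x y : ℝ, x + y = 1 → clamp x + clamp y = 1 := by
    intro x y h
    unfold clamp
    rw [max_def, max_def, min_def, min_def]
    split_ifs <;> linarith
  have sup_sub : ∀ (f : V → ℝ) (v : V),
      fmax S hS (fun u => 1 - f u) v = 1 - fmin S hS f v := by
    intro f v
    unfold fmax fmin
    obtain ⟨u, hu, he⟩ := (S v).exists_mem_eq_inf' (hS v) f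
    apply le_antisymm
    · exact Finset.sup'_le _ _ fun b hb => by have := Finset.inf'_le f hb; linarith
    · rw [he]; exact Finset.le_sup' (fun u => 1 - f u) hu
  have inf_sub : ∀ (f : V → ℝ) (v : V),
      fmin S hS (fun u => 1 - f u) v = 1 - fmax S hS f v := by
    intro f v
    unfold fmax fmin
    obtain ⟨u, hu, he⟩ := (S v).exists_mem_eq_sup' (hS v) f
    apply le_antisymm
    · rw [he]; exact Finset.inf'_le (fun u => 1 - f u) hu
    · exact Finset.le_inf' _ _ fun b hb => by have := Finset.le_sup' f hb; linarith
  intro v t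
  induction t generalizing v with
  | zero =>
    simp only [f1, f2]
    by_cases h : v ∈ T <;> simp [h]
  | succ t ih =>
    by_cases h : v ∈ T
    · simp [f1, f2, h]
    · simp only [f1, f2, if_neg h]
      have hf2 : f2 T S hS R₁ R₂ τ t = fun u => 1 - f1 T S hS R₁ R₂ τ t u := by
        funext u; have := ih u; linarith
      rw [hf2]
      unfold Av1 Av2
      rw [sup_sub, inf_sub]
      set a := fmin S hS (f1 T S hS R₁ R₂ τ t) v with ha
      set b := fmax S hS (f1 T S hS R₁ R₂ τ t) v with hb
      have hab : a ≤ b := by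
        rw [ha, hb]
        unfold fmin fmax
        obtain ⟨u, hu, he⟩ := (S v).exists_mem_eq_inf' (hS v) (f1 T S hS R₁ R₂ τ t)
        rw [he]
        exact Finset.le_sup' _ hu
      have hden : (b - a - 1) * τ + 2 ≥ 1 := by
        nlinarith [hτ.1, hτ.2]
      have hden' : (b - a - 1) * τ + 2 ≠ 0 := by linarith
      have hden2 : (1 - a - (1 - b) - 1) * τ + 2 = (b - a - 1) * τ + 2 := by ring
      rw [hden2]
      apply clamp_sum
      have key : ((1 - τ) * a + b) + ((1 - τ) * (1 - b) + (1 - a)) = (b - a - 1) * τ + 2 := by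
        ring
      have hsum : ((1 - τ) * a + b) / ((b - a - 1) * τ + 2)
          + ((1 - τ) * (1 - b) + (1 - a)) / ((b - a - 1) * τ + 2) = 1 := by
        rw [← add_div, key, div_self hden']
      linear_combination (1 + R₁ v + R₂ v) * hsum
end

section
/- The update operator Av₁ of a taxman bidding game with charging is monotone on the complete lattice [0,1]^V: if f ≤ g pointwise, then Av₁(f) ≤ Av₁(g) pointwise. -/
lemma clamp_mono {x y : ℝ} (h : x ≤ y) : clamp x ≤ clamp y :=
  min_le_min le_rfl (max_le_max le_rfl h)

lemma key_frac (τ m₁ M₁ m₂ M₂ : ℝ) (hτ0 : 0 ≤ τ) (hτ1 : τ ≤ 1)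
    (h0 : 0 ≤ m₁) (h1 : m₁ ≤ M₁) (h2 : M₁ ≤ 1)
    (h0' : 0 ≤ m₂) (h1' : m₂ ≤ M₂) (h2' : M₂ ≤ 1)
    (hm : m₁ ≤ m₂) (hM : M₁ ≤ M₂) :
    ((1 - τ) * m₁ + M₁) / ((M₁ - m₁ - 1) * τ + 2) ≤
      ((1 - τ) * m₂ + M₂) / ((M₂ - m₂ - 1) * τ + 2) := by
  have hm1 : m₁ ≤ 1 := h1.trans h2
  have hD₁ : 0 < (M₁ - m₁ - 1) * τ + 2 := by nlinarith
  have hD₂ : 0 < (M₂ - m₂ - 1) * τ + 2 := by nlinarith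
  have hDm : 0 < (M₂ - m₁ - 1) * τ + 2 := by nlinarith
  have step1 : ((1 - τ) * m₁ + M₁) / ((M₁ - m₁ - 1) * τ + 2) ≤
      ((1 - τ) * m₁ + M₂) / ((M₂ - m₁ - 1) * τ + 2) := by
    rw [div_le_div_iff₀ hD₁ hDm]
    have hkey : 0 ≤ (M₂ - M₁) * ((2 - τ) * (1 - m₁ * τ)) := by
      have : 0 ≤ 1 - m₁ * τ := by nlinarith
      have : 0 ≤ (2 - τ) * (1 - m₁ * τ) := by nlinarith
      exact mul_nonneg (by linarith) this
    nlinarith [hkey]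
  have step2 : ((1 - τ) * m₁ + M₂) / ((M₂ - m₁ - 1) * τ + 2) ≤
      ((1 - τ) * m₂ + M₂) / ((M₂ - m₂ - 1) * τ + 2) := by
    rw [div_le_div_iff₀ hDm hD₂]
    have hb : 0 ≤ 2 - 2 * τ + M₂ * τ + τ * (1 - τ) * (M₂ - 1) := by
      nlinarith [mul_nonneg (mul_nonneg hτ0 (sub_nonneg.2 hτ1)) (sub_nonneg.2 h2'),
        mul_nonneg (h0'.trans h1') hτ0,
        mul_nonneg (sub_nonneg.2 hτ1) (show (0:ℝ) ≤ 2 - τ by linarith)]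
    have hkey : 0 ≤ (m₂ - m₁) * (2 - 2 * τ + M₂ * τ + τ * (1 - τ) * (M₂ - 1)) :=
      mul_nonneg (by linarith) hb
    nlinarith [hkey]
  exact step1.trans step2

theorem Av1_monotone {V : Type*} [DecidableEq V]
    (S : V → Finset V) (hS : ∀ v, (S v).Nonempty)
    (R₁ R₂ : V → ℝ) (hR₁ : ∀ v, 0 ≤ R₁ v) (hR₂ : ∀ v, 0 ≤ R₂ v)
    (τ : ℝ) (hτ : τ ∈ Set.Icc (0 : ℝ) 1)
    (f g : V → ℝ)
    (hf : ∀ v, f v ∈ Set.Icc (0 : ℝ) 1) (hg : ∀ v, g v ∈ Set.Icc (0 : ℝ) 1)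
    (hfg : ∀ v, f v ≤ g v) :
    ∀ v, Av1 S hS R₁ R₂ τ f v ≤ Av1 S hS R₁ R₂ τ g v := by
  intro v
  obtain ⟨hτ0, hτ1⟩ := hτ
  have hminf : 0 ≤ fmin S hS f v := Finset.le_inf' _ _ fun b _ => (hf b).1
  have hming : 0 ≤ fmin S hS g v := Finset.le_inf' _ _ fun b _ => (hg b).1
  have hmaxf : fmax S hS f v ≤ 1 := Finset.sup'_le _ _ fun b _ => (hf b).2
  have hmaxg : fmax S hS g v ≤ 1 := Finset.sup'_le _ _ fun b _ => (hg b).2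
  obtain ⟨u, hu⟩ := hS v
  have hmmf : fmin S hS f v ≤ fmax S hS f v :=
    (Finset.inf'_le _ hu).trans (Finset.le_sup' _ hu)
  have hmmg : fmin S hS g v ≤ fmax S hS g v :=
    (Finset.inf'_le _ hu).trans (Finset.le_sup' _ hu)
  have hmin : fmin S hS f v ≤ fmin S hS g v :=
    Finset.le_inf' _ _ fun b hb => (Finset.inf'_le _ hb).trans (hfg b)
  have hmax : fmax S hS f v ≤ fmax S hS g v :=
    Finset.sup'_le _ _ fun b hb => (hfg b).trans (Finset.le_sup' _ hb)
  have hfrac := key_frac τ (fmin S hS f v) (fmax S hS f v) (fmin S hS g v)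
    (fmax S hS g v) hτ0 hτ1 hminf hmmf hmaxf hming hmmg hmaxg hmin hmax
  have hc : (0:ℝ) ≤ 1 + R₁ v + R₂ v := by linarith [hR₁ v, hR₂ v]
  exact clamp_mono (by
    have := mul_le_mul_of_nonneg_right hfrac hc
    linarith)
end

section
/- Among all fixed points of the operator Av₁ on [0,1]^V that vanish on the target set T, the limit function f₁* is the greatest: if h : V → [0,1] satisfies h(v) = 0 for all v ∈ T and h(v) = Av₁(h)(v) for all v ∉ T, then h ≤ f₁* pointwise. -/
lemma clamp_mem (x : ℝ) : clamp x ∈ Set.Icc (0:ℝ) 1 :=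
  ⟨le_min zero_le_one (le_max_left 0 x), min_le_left _ _⟩

lemma clamp_mono_s10 : Monotone clamp := fun _ _ hxy =>
  min_le_min le_rfl (max_le_max le_rfl hxy)

lemma core (τ m₁ M₁ m₂ M₂ : ℝ) (hτ0 : 0 ≤ τ) (hτ1 : τ ≤ 1)
    (hm₁0 : 0 ≤ m₁) (hM₁1 : M₁ ≤ 1) (hM₂1 : M₂ ≤ 1)
    (hmM₁ : m₁ ≤ M₁) (hmM₂ : m₂ ≤ M₂) (hm : m₁ ≤ m₂) (hM : M₁ ≤ M₂) :
    ((1 - τ) * m₁ + M₁) / ((M₁ - m₁ - 1) * τ + 2) ≤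
      ((1 - τ) * m₂ + M₂) / ((M₂ - m₂ - 1) * τ + 2) := by
  have d₁ : 0 < (M₁ - m₁ - 1) * τ + 2 := by nlinarith [mul_nonneg (sub_nonneg.2 hmM₁) hτ0]
  have d₂ : 0 < (M₂ - m₂ - 1) * τ + 2 := by nlinarith [mul_nonneg (sub_nonneg.2 hmM₂) hτ0]
  rw [div_le_div_iff₀ d₁ d₂]
  nlinarith [mul_nonneg (sub_nonneg.2 hm) (sub_nonneg.2 hM₂1),
    mul_nonneg (sub_nonneg.2 hM) (sub_nonneg.2 hm₁0),
    mul_nonneg (mul_nonneg hτ0 (sub_nonneg.2 hm)) (sub_nonneg.2 hM₂1),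
    mul_nonneg (mul_nonneg hτ0 (sub_nonneg.2 hM)) hm₁0,
    mul_nonneg (sub_nonneg.2 hτ1) (sub_nonneg.2 hm),
    mul_nonneg (sub_nonneg.2 hτ1) (sub_nonneg.2 hM),
    sq_nonneg (τ - 1), sq_nonneg τ]

lemma Av1_mono {V : Type*} [DecidableEq V] (S : V → Finset V) (hS : ∀ v, (S v).Nonempty) (R₁ R₂ : V → ℝ)
    (hR₁ : ∀ v, 0 ≤ R₁ v) (hR₂ : ∀ v, 0 ≤ R₂ v)
    (τ : ℝ) (hτ0 : 0 ≤ τ) (hτ1 : τ ≤ 1)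
    (f g : V → ℝ) (hf : ∀ v, f v ∈ Set.Icc (0:ℝ) 1) (hg : ∀ v, g v ∈ Set.Icc (0:ℝ) 1)
    (hfg : ∀ v, f v ≤ g v) (v : V) :
    Av1 S hS R₁ R₂ τ f v ≤ Av1 S hS R₁ R₂ τ g v := by
  obtain ⟨w, hw⟩ := hS v
  have hmf0 : 0 ≤ fmin S hS f v := Finset.le_inf' _ _ fun b _ => (hf b).1
  have hmg0 : 0 ≤ fmin S hS g v := Finset.le_inf' _ _ fun b _ => (hg b).1
  have hMf1 : fmax S hS f v ≤ 1 := Finset.sup'_le _ _ fun b _ => (hf b).2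
  have hMg1 : fmax S hS g v ≤ 1 := Finset.sup'_le _ _ fun b _ => (hg b).2
  have hmMf : fmin S hS f v ≤ fmax S hS f v :=
    le_trans (Finset.inf'_le _ hw) (Finset.le_sup' _ hw)
  have hmMg : fmin S hS g v ≤ fmax S hS g v :=
    le_trans (Finset.inf'_le _ hw) (Finset.le_sup' _ hw)
  have hmm : fmin S hS f v ≤ fmin S hS g v :=
    Finset.le_inf' _ _ fun b hb => (Finset.inf'_le _ hb).trans (hfg b)
  have hMM : fmax S hS f v ≤ fmax S hS g v :=
    Finset.sup'_mono_fun fun b _ => hfg b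
  apply clamp_mono_s10
  have hc : (0:ℝ) ≤ 1 + R₁ v + R₂ v := by linarith [hR₁ v, hR₂ v]
  have := core τ (fmin S hS f v) (fmax S hS f v) (fmin S hS g v) (fmax S hS g v)
    hτ0 hτ1 hmf0 hMf1 hMg1 hmMf hmMg hmm hMM
  have := mul_le_mul_of_nonneg_right this hc
  linarith


theorem taxman_limit_is_greatest_fixed_point {V : Type*} [DecidableEq V]
    (T : Finset V) (S : V → Finset V) (hS : ∀ v, (S v).Nonempty)
    (R₁ R₂ : V → ℝ) (hR₁ : ∀ v, 0 ≤ R₁ v) (hR₂ : ∀ v, 0 ≤ R₂ v)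
    (τ : ℝ) (hτ : τ ∈ Set.Icc (0 : ℝ) 1)
    (f1s : V → ℝ)
    (hlim : ∀ v, Filter.Tendsto (fun t => f1 T S hS R₁ R₂ τ t v)
      Filter.atTop (nhds (f1s v)))
    (h : V → ℝ) (hmem : ∀ v, h v ∈ Set.Icc (0 : ℝ) 1)
    (hT : ∀ v ∈ T, h v = 0)
    (hfix : ∀ v ∉ T, h v = Av1 S hS R₁ R₂ τ h v) :
    ∀ v, h v ≤ f1s v := by
  have hf1mem : ∀ t v, f1 T S hS R₁ R₂ τ t v ∈ Set.Icc (0:ℝ) 1 := by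
    intro t
    induction t with
    | zero => intro v; simp only [f1]; split <;> norm_num
    | succ t ih =>
      intro v; simp only [f1]; split
      · norm_num
      · exact clamp_mem _
  have key : ∀ t v, h v ≤ f1 T S hS R₁ R₂ τ t v := by
    intro t
    induction t with
    | zero =>
      intro v; simp only [f1]
      split
      · next hv => exact (hT v hv).le
      · exact (hmem v).2
    | succ t ih =>
      intro v; simp only [f1]
      split
      · next hv => exact (hT v hv).le
      · next hv =>
        rw [hfix v hv]
        exact Av1_mono S hS R₁ R₂ hR₁ hR₂ τ hτ.1 hτ.2 h _ hmem (hf1mem t) ih v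
  intro v
  exact ge_of_tendsto (hlim v) (Filter.Eventually.of_forall fun t => key t v)
end
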